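/- (Layer-specific target bound) In the N-layer setting with h = f_i ∘ g_i, for each layer division i: R_T(h) ≤ R_S(h) + d_{F_iΔF_i}(p_S^{g_i}, p_T^{g_i}) + d_{(F_i)_{G_iΔG_i}}(p_S, p_T) + λ_{F_iG_i}(g_i), where λ_{F_iG_i}(g_i) = inf_{f' ∈ F_i, g' ∈ G_i} [2R_S(f'g_i) + R_S(f'g') + R_T(f'g')]. -/

import Mathlib

open MeasureTheory

/-- Zero-one disagreement risk between two hypotheses under distribution `p`. -/
noncomputable def risk {X : Type*} [MeasurableSpace X] (p : Measure X)
    (h h' : X → Bool) : ℝ :=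
  ∫ x, (if h x = h' x then (0 : ℝ) else 1) ∂p

/-!
For any `f' ∈ F_i`, `g' ∈ G_i`, walk from `f_i ∘ g_i` to the true labelling through
`f' ∘ g_i` and `f' ∘ g'` under `p_T`. The first step changes only the predictor on top of `g_i`
and the second only the encoder below `f'`, so their target disagreements exceed the source ones
by at most the two divergences; the source disagreements are then bounded, by the triangle
inequality again, by source risks against the truth. Taking the infimum over `f'`, `g'` gives `λ`.
-/

section Risk

variable {X : Type*} [MeasurableSpace X] {p : Measure X}

lemma risk_eq_measureReal {h h' : X → Bool} (hh : Measurable h) (hh' : Measurable h') :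
    risk p h h' = p.real {x | h x ≠ h' x} := by
  have hs : MeasurableSet {x | h x ≠ h' x} := (measurableSet_eq_fun hh hh').compl
  rw [← integral_indicator_one hs, risk]
  congr 1 with x
  by_cases hx : h x = h' x <;> simp [hx]

lemma risk_nonneg (h h' : X → Bool) : 0 ≤ risk p h h' :=
  integral_nonneg fun x => by split_ifs <;> norm_num

lemma risk_le_one [IsProbabilityMeasure p] (h h' : X → Bool) : risk p h h' ≤ 1 := by
  have hle : ∀ x, ‖if h x = h' x then (0 : ℝ) else 1‖ ≤ 1 := fun x => by split_ifs <;> norm_num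
  simpa [risk] using
    (le_abs_self _).trans (norm_integral_le_of_norm_le_const (μ := p) (.of_forall hle))

lemma risk_comm (h h' : X → Bool) : risk p h h' = risk p h' h := by
  simp only [risk, eq_comm]

lemma risk_triangle [IsFiniteMeasure p] {a b c : X → Bool} (ha : Measurable a)
    (hb : Measurable b) (hc : Measurable c) : risk p a c ≤ risk p a b + risk p b c := by
  rw [risk_eq_measureReal ha hc, risk_eq_measureReal ha hb, risk_eq_measureReal hb hc]
  refine (measureReal_mono fun x hx => ?_).trans (measureReal_union_le _ _)
  by_contra hx'
  simp_all

lemma abs_risk_sub_risk_le_one {q : Measure X} [IsProbabilityMeasure p] [IsProbabilityMeasure q]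
    (h h' : X → Bool) : |risk p h h' - risk q h h'| ≤ 1 :=
  abs_sub_le_of_nonneg_of_le (risk_nonneg h h') (risk_le_one h h')
    (risk_nonneg h h') (risk_le_one h h')

end Risk

lemma risk_le_source_add_shifts {X : Type*} [MeasurableSpace X] {pS pT : Measure X}
    [IsFiniteMeasure pS] [IsFiniteMeasure pT] {h b c y : X → Bool} (hh : Measurable h)
    (hb : Measurable b) (hc : Measurable c) (hy : Measurable y) :
    risk pT h y ≤ risk pS h y + (risk pT h b - risk pS h b) + (risk pT b c - risk pS b c) +
      (2 * risk pS b y + risk pS c y + risk pT c y) := by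
  have hT₁ : risk pT h y ≤ risk pT h b + risk pT b y := risk_triangle hh hb hy
  have hT₂ : risk pT b y ≤ risk pT b c + risk pT c y := risk_triangle hb hc hy
  have hS₁ : risk pS h b ≤ risk pS h y + risk pS b y :=
    risk_comm (p := pS) b y ▸ risk_triangle hh hy hb
  have hS₂ : risk pS b c ≤ risk pS b y + risk pS c y :=
    risk_comm (p := pS) c y ▸ risk_triangle hb hy hc
  linarith

section Divergence

variable {X Z : Type*} [MeasurableSpace X] (pS pT : Measure X) (F : Set (Z → Bool))

/-- `d_{FΔF}(p_S^g, p_T^g)`: the `FΔF`-divergence of the pushforwards along the encoder `g`. -/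
noncomputable def predictorDivergence (g : X → Z) : ℝ :=
  ⨆ f : F, ⨆ f' : F,
    |risk pS ((f : Z → Bool) ∘ g) ((f' : Z → Bool) ∘ g) -
      risk pT ((f : Z → Bool) ∘ g) ((f' : Z → Bool) ∘ g)|

/-- `d_{(F)_{GΔG}}(p_S, p_T)` -/
noncomputable def encoderDivergence (G : Set (X → Z)) : ℝ :=
  ⨆ f : F, ⨆ g : G, ⨆ g' : G,
    |risk pS ((f : Z → Bool) ∘ (g : X → Z)) ((f : Z → Bool) ∘ (g' : X → Z)) -
      risk pT ((f : Z → Bool) ∘ (g : X → Z)) ((f : Z → Bool) ∘ (g' : X → Z))|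

variable {pS pT F} [IsProbabilityMeasure pS] [IsProbabilityMeasure pT]

lemma risk_le_add_predictorDivergence {f f' : Z → Bool} (hf : f ∈ F) (hf' : f' ∈ F)
    (g : X → Z) :
    risk pT (f ∘ g) (f' ∘ g) ≤ risk pS (f ∘ g) (f' ∘ g) + predictorDivergence pS pT F g := by
  have hbdd : |risk pS (f ∘ g) (f' ∘ g) - risk pT (f ∘ g) (f' ∘ g)| ≤
      predictorDivergence pS pT F g := by
    refine le_ciSup₂ (f := fun (f f' : F) => |risk pS ((f : Z → Bool) ∘ g) ((f' : Z → Bool) ∘ g) -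
      risk pT ((f : Z → Bool) ∘ g) ((f' : Z → Bool) ∘ g)|) ⟨1, ?_⟩ ⟨f, hf⟩ ⟨f', hf'⟩
    rintro _ ⟨_, ⟨_, rfl⟩, ⟨_, rfl⟩⟩
    exact abs_risk_sub_risk_le_one _ _
  linarith [(abs_sub_le_iff.1 hbdd).2]

lemma risk_le_add_encoderDivergence {G : Set (X → Z)} {f : Z → Bool} {g g' : X → Z}
    (hf : f ∈ F) (hg : g ∈ G) (hg' : g' ∈ G) :
    risk pT (f ∘ g) (f ∘ g') ≤ risk pS (f ∘ g) (f ∘ g') + encoderDivergence pS pT F G := by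
  have hbdd : |risk pS (f ∘ g) (f ∘ g') - risk pT (f ∘ g) (f ∘ g')| ≤
      encoderDivergence pS pT F G := by
    refine (le_ciSup (f := fun g' : G => |risk pS (f ∘ g) (f ∘ (g' : X → Z)) -
        risk pT (f ∘ g) (f ∘ (g' : X → Z))|) ⟨1, ?_⟩ ⟨g', hg'⟩).trans
      (le_ciSup₂ (f := fun (f : F) (g : G) => ⨆ g' : G,
        |risk pS ((f : Z → Bool) ∘ (g : X → Z)) ((f : Z → Bool) ∘ (g' : X → Z)) -
          risk pT ((f : Z → Bool) ∘ (g : X → Z)) ((f : Z → Bool) ∘ (g' : X → Z))|)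
        ⟨1, ?_⟩ ⟨f, hf⟩ ⟨g, hg⟩)
    · rintro _ ⟨_, rfl⟩
      exact abs_risk_sub_risk_le_one _ _
    · rintro _ ⟨_, ⟨_, rfl⟩, ⟨_, rfl⟩⟩
      exact Real.iSup_le (fun _ => abs_risk_sub_risk_le_one _ _) zero_le_one
  linarith [(abs_sub_le_iff.1 hbdd).2]

end Divergence

theorem layer_specific_bound_general {X Z : Type*} [MeasurableSpace X]
    (pS pT : Measure X) [IsProbabilityMeasure pS] [IsProbabilityMeasure pT]
    (htrue : X → Bool) (hmtrue : Measurable htrue)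
    (Fi : Set (Z → Bool)) (Gi : Set (X → Z))
    (hm : ∀ f ∈ Fi, ∀ g ∈ Gi, Measurable (f ∘ g))
    (fi : Z → Bool) (hfi : fi ∈ Fi) (gi : X → Z) (hgi : gi ∈ Gi) :
    risk pT (fi ∘ gi) htrue ≤
      risk pS (fi ∘ gi) htrue +
      (⨆ f : Fi, ⨆ f' : Fi,
        |risk pS ((f : Z → Bool) ∘ gi) ((f' : Z → Bool) ∘ gi) -
          risk pT ((f : Z → Bool) ∘ gi) ((f' : Z → Bool) ∘ gi)|) +
      (⨆ f : Fi, ⨆ g : Gi, ⨆ g' : Gi,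
        |risk pS ((f : Z → Bool) ∘ (g : X → Z)) ((f : Z → Bool) ∘ (g' : X → Z)) -
          risk pT ((f : Z → Bool) ∘ (g : X → Z)) ((f : Z → Bool) ∘ (g' : X → Z))|) +
      (⨅ f' : Fi, ⨅ g' : Gi,
        2 * risk pS ((f' : Z → Bool) ∘ gi) htrue +
          risk pS ((f' : Z → Bool) ∘ (g' : X → Z)) htrue +
          risk pT ((f' : Z → Bool) ∘ (g' : X → Z)) htrue) := by
  have : Nonempty Fi := ⟨⟨fi, hfi⟩⟩
  have : Nonempty Gi := ⟨⟨gi, hgi⟩⟩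
  change _ ≤ _ + predictorDivergence pS pT Fi gi + encoderDivergence pS pT Fi Gi + _
  rw [← sub_le_iff_le_add']
  refine le_ciInf fun ⟨f', hf'⟩ => le_ciInf fun ⟨g', hg'⟩ => ?_
  have hchain := risk_le_source_add_shifts (pS := pS) (pT := pT) (hm fi hfi gi hgi)
    (hm f' hf' gi hgi) (hm f' hf' g' hg') hmtrue
  have hpred := risk_le_add_predictorDivergence (pS := pS) (pT := pT) hfi hf' gi
  have henc := risk_le_add_encoderDivergence (pS := pS) (pT := pT) hf' hgi hg'
  linarith

/-- Layer-specific target bound for a division `h = f_i ∘ g_i`. -/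
theorem layer_specific_bound {X Z : Type*} [MeasurableSpace X]
    (pS pT : Measure X) [IsProbabilityMeasure pS] [IsProbabilityMeasure pT]
    (htrue : X → Bool) (hmtrue : Measurable htrue)
    (Fi : Set (Z → Bool)) (Gi : Set (X → Z))
    (hFne : Fi.Nonempty) (hGne : Gi.Nonempty)
    (hm : ∀ f ∈ Fi, ∀ g ∈ Gi, Measurable (f ∘ g))
    (fi : Z → Bool) (hfi : fi ∈ Fi) (gi : X → Z) (hgi : gi ∈ Gi) :
    risk pT (fi ∘ gi) htrue ≤
      risk pS (fi ∘ gi) htrue +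
      (⨆ f : Fi, ⨆ f' : Fi,
        |risk pS ((f : Z → Bool) ∘ gi) ((f' : Z → Bool) ∘ gi) -
          risk pT ((f : Z → Bool) ∘ gi) ((f' : Z → Bool) ∘ gi)|) +
      (⨆ f : Fi, ⨆ g : Gi, ⨆ g' : Gi,
        |risk pS ((f : Z → Bool) ∘ (g : X → Z)) ((f : Z → Bool) ∘ (g' : X → Z)) -
          risk pT ((f : Z → Bool) ∘ (g : X → Z)) ((f : Z → Bool) ∘ (g' : X → Z))|) +
      (⨅ f' : Fi, ⨅ g' : Gi,
        2 * risk pS ((f' : Z → Bool) ∘ gi) htrue +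
          risk pS ((f' : Z → Bool) ∘ (g' : X → Z)) htrue +
          risk pT ((f' : Z → Bool) ∘ (g' : X → Z)) htrue) :=
  layer_specific_bound_general pS pT htrue hmtrue Fi Gi hm fi hfi gi hgi
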